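/- arXiv:1101.1605 — 8 statements merged into one kernel-verified Lean document; each statement's English description precedes it below -/
import Mathlib

section
/- Let v, G, ψ : ℝ → ℝ be smooth functions. Define the Schrödinger operator L by Lψ = ψ'' + vψ, the Lenard operators KG = (1/4)G''' + (1/2)(v·G' + (v·G)') and JG = G', and the operator V by Vψ = -(1/4)G'·ψ + (1/2)G·ψ'. Then for every smooth ψ the commutator identity [V, L]ψ = V(Lψ) - L(Vψ) = (KG)·ψ - (JG)·(Lψ) holds pointwise on ℝ. -/
/-!
`V = a + b ∂` with `a = -G'/4`, `b = G/2` is a first-order operator, and the Leibniz rule gives,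
for any such operator, `[a + b ∂, ∂² + v] = (b v' - a'') - (2a' + b'') ∂ - 2b' ∂²`.
For the choice of `a` and `b` coming from `G` the coefficient of `∂` cancels, and writing
`∂² = L - v` turns the remaining terms into `(K G) - (J G) L`.
-/

noncomputable def schrodingerOp (v f : ℝ → ℝ) (x : ℝ) : ℝ := deriv (deriv f) x + v x * f x

noncomputable def firstOrderOp (a b f : ℝ → ℝ) (x : ℝ) : ℝ := a x * f x + b x * deriv f x

section

variable {a b f v : ℝ → ℝ} {x : ℝ}

theorem deriv_firstOrderOp (ha : ContDiff ℝ 1 a) (hb : ContDiff ℝ 1 b) (hf : ContDiff ℝ 2 f) :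
    deriv (firstOrderOp a b f) = fun x =>
      deriv a x * f x + (a x + deriv b x) * deriv f x + b x * deriv (deriv f) x := by
  have ha' : Differentiable ℝ a := ha.differentiable one_ne_zero
  have hb' : Differentiable ℝ b := hb.differentiable one_ne_zero
  have hf' : Differentiable ℝ f := hf.differentiable two_ne_zero
  have hf'' : Differentiable ℝ (deriv f) := hf.differentiable_deriv_two
  funext x
  unfold firstOrderOp
  rw [deriv_fun_add (by fun_prop) (by fun_prop), deriv_fun_mul (ha' x) (hf' x),
    deriv_fun_mul (hb' x) (hf'' x)]
  ring

theorem deriv_deriv_firstOrderOp (ha : ContDiff ℝ 2 a) (hb : ContDiff ℝ 2 b)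
    (hf : ContDiff ℝ 3 f) :
    deriv (deriv (firstOrderOp a b f)) x = deriv (deriv a) x * f x
      + (2 * deriv a x + deriv (deriv b) x) * deriv f x
      + (a x + 2 * deriv b x) * deriv (deriv f) x + b x * deriv (deriv (deriv f)) x := by
  have ha' : Differentiable ℝ a := ha.differentiable two_ne_zero
  have hb' : Differentiable ℝ b := hb.differentiable two_ne_zero
  have hf' : Differentiable ℝ f := hf.differentiable three_ne_zero
  have ha'' : Differentiable ℝ (deriv a) := ha.differentiable_deriv_two
  have hb'' : Differentiable ℝ (deriv b) := hb.differentiable_deriv_two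
  have hf'' : Differentiable ℝ (deriv f) := (hf.of_le (by norm_num)).differentiable_deriv_two
  have hf''' : Differentiable ℝ (deriv (deriv f)) := by fun_prop
  rw [deriv_firstOrderOp (ha.of_le (by norm_num)) (hb.of_le (by norm_num)) (hf.of_le (by norm_num)),
    deriv_fun_add (by fun_prop) (by fun_prop), deriv_fun_add (by fun_prop) (by fun_prop),
    deriv_fun_mul (ha'' x) (hf' x), deriv_fun_mul (by fun_prop) (hf'' x),
    deriv_fun_mul (hb' x) (hf''' x), deriv_fun_add (ha' x) (hb'' x)]
  ring

theorem deriv_schrodingerOp (hv : DifferentiableAt ℝ v x) (hf : ContDiff ℝ 3 f) :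
    deriv (schrodingerOp v f) x
      = deriv (deriv (deriv f)) x + deriv v x * f x + v x * deriv f x := by
  have hf' : Differentiable ℝ f := hf.differentiable three_ne_zero
  have hf''' : Differentiable ℝ (deriv (deriv f)) := by fun_prop
  unfold schrodingerOp
  rw [deriv_fun_add (hf''' x) (hv.fun_mul (hf' x)), deriv_fun_mul hv (hf' x)]
  ring

theorem firstOrderOp_schrodingerOp_sub (hv : DifferentiableAt ℝ v x) (ha : ContDiff ℝ 2 a)
    (hb : ContDiff ℝ 2 b) (hf : ContDiff ℝ 3 f) :
    firstOrderOp a b (schrodingerOp v f) x - schrodingerOp v (firstOrderOp a b f) x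
      = (b x * deriv v x - deriv (deriv a) x) * f x
        - (2 * deriv a x + deriv (deriv b) x) * deriv f x - 2 * deriv b x * deriv (deriv f) x := by
  have hVL : firstOrderOp a b (schrodingerOp v f) x
      = a x * schrodingerOp v f x + b x * deriv (schrodingerOp v f) x := rfl
  have hLV : schrodingerOp v (firstOrderOp a b f) x
      = deriv (deriv (firstOrderOp a b f)) x + v x * firstOrderOp a b f x := rfl
  rw [hVL, hLV, deriv_schrodingerOp hv hf, deriv_deriv_firstOrderOp ha hb hf]
  simp only [schrodingerOp, firstOrderOp]
  ring

end

/-- For the Schrödinger operator `L ψ = ψ'' + v ψ`, the Lenard operators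
`K G = (1/4) G''' + (1/2)(v G' + (v G)')`, `J G = G'`, and the operator
`V ψ = -(1/4) G' ψ + (1/2) G ψ'`, the commutator identity
`[V, L] ψ = V (L ψ) - L (V ψ) = (K G) ψ - (J G) (L ψ)` holds pointwise on ℝ. -/
theorem negKdV_operator_equation
    (v G ψ : ℝ → ℝ)
    (hv : ContDiff ℝ (⊤ : ℕ∞) v) (hG : ContDiff ℝ (⊤ : ℕ∞) G)
    (hψ : ContDiff ℝ (⊤ : ℕ∞) ψ) :
    let L : (ℝ → ℝ) → (ℝ → ℝ) := fun f x => deriv (deriv f) x + v x * f x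
    let K : (ℝ → ℝ) → (ℝ → ℝ) := fun f x =>
      (1/4) * deriv (deriv (deriv f)) x
        + (1/2) * (v x * deriv f x + deriv (fun y => v y * f y) x)
    let J : (ℝ → ℝ) → (ℝ → ℝ) := fun f x => deriv f x
    let V : (ℝ → ℝ) → (ℝ → ℝ) := fun f x =>
      -(1/4) * deriv G x * f x + (1/2) * G x * deriv f x
    ∀ x : ℝ, V (L ψ) x - L (V ψ) x = K G x * ψ x - J G x * L ψ x := by
  intro L K J V x
  have hv' : DifferentiableAt ℝ v x := hv.differentiable (by simp) x
  have hG' : DifferentiableAt ℝ G x := hG.differentiable (by simp) x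
  have hG2 : ContDiff ℝ 2 G := contDiff_infty.mp hG 2
  have hG3 : ContDiff ℝ 3 G := contDiff_infty.mp hG 3
  calc V (L ψ) x - L (V ψ) x
      = _ := firstOrderOp_schrodingerOp_sub (a := fun y => -(1/4) * deriv G y)
          (b := fun y => 1/2 * G y) hv' (by fun_prop) (by fun_prop) (contDiff_infty.mp hψ 3)
    _ = K G x * ψ x - J G x * L ψ x := by
      simp only [K, J, L, deriv_const_mul_field', deriv_fun_mul hv' hG']
      ring
end

section
/- Let u : ℝ → ℝ be smooth and nonvanishing, and set v = -u''/u. Then the Hamiltonian operator K factorizes as K = (1/4) u⁻² ∂ u² ∂ u² ∂ u⁻²; explicitly, for every smooth G : ℝ → ℝ, (1/4)G''' + (1/2)(v·G' + (v·G)') = (1/4) u⁻² · ( u² · ( u² · (u⁻²·G)' )' )' pointwise on ℝ. -/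
/-!
With `a = u'/u` (the logarithmic derivative of `u`) one has `u⁻² ∂ u² = ∂ + 2a` and
`u² ∂ u⁻² = ∂ - 2a`, so the right-hand side is `(1/4) (∂ + 2a) ∂ (∂ - 2a)`. Expanding gives
`(1/4) (∂³ - 4r ∂ - 2r')` with `r = a' + a²`, and the Riccati identity `a' + a² = u''/u = -v`
turns this into `K`.
-/

open scoped ContDiff

section
variable {𝕜 : Type*} [NontriviallyNormedField 𝕜] {u G H a : 𝕜 → 𝕜} {x : 𝕜}

theorem sq_mul_deriv_inv_sq_mul (hu : DifferentiableAt 𝕜 u x) (hG : DifferentiableAt 𝕜 G x)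
    (hux : u x ≠ 0) :
    u x ^ 2 * deriv (fun y => (u y ^ 2)⁻¹ * G y) x = deriv G x - 2 * logDeriv u x * G x := by
  have hu2 : DifferentiableAt 𝕜 (fun y => u y ^ 2) x := by fun_prop
  rw [deriv_fun_mul (hu2.fun_inv (pow_ne_zero 2 hux)) hG,
    deriv_fun_inv'' hu2 (pow_ne_zero 2 hux), deriv_fun_pow hu, logDeriv_apply]
  field_simp
  ring

theorem inv_sq_mul_deriv_sq_mul (hu : DifferentiableAt 𝕜 u x) (hH : DifferentiableAt 𝕜 H x)
    (hux : u x ≠ 0) :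
    (u x ^ 2)⁻¹ * deriv (fun y => u y ^ 2 * H y) x = deriv H x + 2 * logDeriv u x * H x := by
  rw [deriv_fun_mul (by fun_prop) hH, deriv_fun_pow hu, logDeriv_apply]
  field_simp
  ring

theorem deriv_logDeriv_add_logDeriv_sq (hu : DifferentiableAt 𝕜 u x)
    (hu' : DifferentiableAt 𝕜 (deriv u) x) (hux : u x ≠ 0) :
    deriv (logDeriv u) x + logDeriv u x ^ 2 = deriv (deriv u) x / u x := by
  rw [logDeriv, deriv_div hu' hu hux, Pi.div_apply]
  field_simp
  ring

theorem deriv_add_mul_deriv_deriv_sub_mul (ha : ContDiff 𝕜 ∞ a) (hG : ContDiff 𝕜 ∞ G) (x : 𝕜) :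
    deriv (deriv (fun y => deriv G y - 2 * a y * G y)) x
        + 2 * a x * deriv (fun y => deriv G y - 2 * a y * G y) x
      = deriv (deriv (deriv G)) x - 4 * (deriv a x + a x ^ 2) * deriv G x
        - 2 * deriv (fun y => deriv a y + a y ^ 2) x * G x := by
  have hd : ∀ {f : 𝕜 → 𝕜}, ContDiff 𝕜 ∞ f → Differentiable 𝕜 f :=
    fun hf => hf.differentiable (by simp)
  have da := hd ha
  have da' := hd (show ContDiff 𝕜 ∞ (deriv a) by fun_prop)
  have dG := hd hG
  have dG' := hd (show ContDiff 𝕜 ∞ (deriv G) by fun_prop)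
  have dG'' := hd (show ContDiff 𝕜 ∞ (deriv (deriv G)) by fun_prop)
  have hH : deriv (fun y => deriv G y - 2 * a y * G y)
      = fun y => deriv (deriv G) y - 2 * (deriv a y * G y + a y * deriv G y) := by
    funext y
    rw [deriv_fun_sub (by fun_prop) (by fun_prop), deriv_fun_mul (by fun_prop) (by fun_prop),
      deriv_const_mul _ (by fun_prop)]
    ring
  rw [hH, deriv_fun_sub (by fun_prop) (by fun_prop), deriv_const_mul _ (by fun_prop),
    deriv_fun_add (by fun_prop) (by fun_prop), deriv_fun_mul (by fun_prop) (by fun_prop),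
    deriv_fun_mul (by fun_prop) (by fun_prop), deriv_fun_add (by fun_prop) (by fun_prop),
    deriv_fun_pow (by fun_prop)]
  ring

end

/-- With `v = -u''/u` (`u` smooth and nonvanishing), the Hamiltonian
operator `K` factorizes as `K = (1/4) u⁻² ∂ u² ∂ u² ∂ u⁻²`:
`(1/4) G''' + (1/2)(v G' + (v G)') = (1/4) u⁻² (u² (u² (u⁻² G)')')'` pointwise on ℝ. -/
theorem hamiltonian_operator_K_factorization
    (u : ℝ → ℝ) (hu : ContDiff ℝ (⊤ : ℕ∞) u) (hu0 : ∀ x : ℝ, u x ≠ 0)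
    (v : ℝ → ℝ) (hv : ∀ x : ℝ, v x = -(deriv (deriv u) x) / u x) :
    ∀ (G : ℝ → ℝ), ContDiff ℝ (⊤ : ℕ∞) G →
      ∀ x : ℝ,
        (1/4) * deriv (deriv (deriv G)) x
          + (1/2) * (v x * deriv G x + deriv (fun y => v y * G y) x)
        = (1/4) * (u x ^ 2)⁻¹ *
            deriv (fun y => u y ^ 2 *
              deriv (fun z => u z ^ 2 *
                deriv (fun w => (u w ^ 2)⁻¹ * G w) z) y) x := by
  intro G hG x
  have hd : ∀ {f : ℝ → ℝ}, ContDiff ℝ ∞ f → Differentiable ℝ f :=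
    fun hf => hf.differentiable (by simp)
  have hu' : ContDiff ℝ ∞ (deriv u) := by fun_prop
  have ha : ContDiff ℝ ∞ (logDeriv u) := hu'.div hu hu0
  have hv_riccati : v = fun y => -(deriv (logDeriv u) y + logDeriv u y ^ 2) := by
    funext y
    rw [hv, deriv_logDeriv_add_logDeriv_sq (hd hu y) (hd hu' y) (hu0 y), neg_div]
  have hinner : (fun z => u z ^ 2 * deriv (fun w => (u w ^ 2)⁻¹ * G w) z)
      = fun z => deriv G z - 2 * logDeriv u z * G z :=
    funext fun z => sq_mul_deriv_inv_sq_mul (hd hu z) (hd hG z) (hu0 z)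
  have hH : ContDiff ℝ ∞ (deriv fun z => deriv G z - 2 * logDeriv u z * G z) := by fun_prop
  have hvG : ContDiff ℝ ∞ v := by rw [hv_riccati]; fun_prop
  rw [hinner, mul_assoc, inv_sq_mul_deriv_sq_mul (hd hu x) (hd hH x) (hu0 x),
    deriv_add_mul_deriv_deriv_sub_mul ha hG x, deriv_fun_mul (hd hvG x) (hd hG x),
    hv_riccati, deriv.fun_neg]
  ring
end

section
/- Let u, w : ℝ → ℝ be smooth with u nonvanishing, suppose w' = u⁻², and set v = -u''/u. Then G = u²·w lies in the kernel of the operator K, i.e. (1/4)(u²w)''' + (1/2)(v·(u²w)' + (v·u²w)') = 0 pointwise on ℝ. -/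
/-!
With `v = -u''/u`, the function `u` solves the Schrödinger equation `ψ'' + v ψ = 0`, and by
reduction of order so does `u w` when `w' = u⁻²`. For any two solutions `ψ, φ` the product
`G = ψ φ` satisfies `G'' = 2 ψ' φ' - 2 v G`, hence `G''' = -2 v' G - 4 v G'`, which is exactly
`K G = 0`. Apply this to `u² w = u · (u w)`.
-/

/-- The second Hamiltonian operator `K` of the KdV hierarchy, applied to `G` at `x`. -/
noncomputable def kdvK (v G : ℝ → ℝ) (x : ℝ) : ℝ :=
  (1/4) * deriv (deriv (deriv G)) x + (1/2) * (v x * deriv G x + deriv (fun y => v y * G y) x)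

section ProductOfSolutions

variable {v ψ φ : ℝ → ℝ}

theorem deriv_deriv_mul_of_solutions (hψ : Differentiable ℝ ψ) (hφ : Differentiable ℝ φ)
    (hψ' : Differentiable ℝ (deriv ψ)) (hφ' : Differentiable ℝ (deriv φ))
    (hψ'' : ∀ x, deriv (deriv ψ) x = -(v x * ψ x)) (hφ'' : ∀ x, deriv (deriv φ) x = -(v x * φ x)) :
    deriv (deriv fun y => ψ y * φ y) =
      fun x => 2 * (deriv ψ x * deriv φ x) - 2 * v x * (ψ x * φ x) := by
  have h1 : deriv (fun y => ψ y * φ y) = fun y => deriv ψ y * φ y + ψ y * deriv φ y :=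
    funext fun y => deriv_fun_mul (hψ y) (hφ y)
  funext x
  have h2 : HasDerivAt (fun y => deriv ψ y * φ y + ψ y * deriv φ y)
      (deriv (deriv ψ) x * φ x + deriv ψ x * deriv φ x
        + (deriv ψ x * deriv φ x + ψ x * deriv (deriv φ) x)) x :=
    ((hψ' x).hasDerivAt.mul (hφ x).hasDerivAt).add ((hψ x).hasDerivAt.mul (hφ' x).hasDerivAt)
  rw [h1, h2.deriv, hψ'' x, hφ'' x]
  ring

theorem deriv_deriv_deriv_mul_of_solutions (hv : Differentiable ℝ v)
    (hψ : Differentiable ℝ ψ) (hφ : Differentiable ℝ φ)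
    (hψ' : Differentiable ℝ (deriv ψ)) (hφ' : Differentiable ℝ (deriv φ))
    (hψ'' : ∀ x, deriv (deriv ψ) x = -(v x * ψ x)) (hφ'' : ∀ x, deriv (deriv φ) x = -(v x * φ x))
    (x : ℝ) :
    deriv (deriv (deriv fun y => ψ y * φ y)) x =
      -2 * deriv v x * (ψ x * φ x) - 4 * v x * deriv (fun y => ψ y * φ y) x := by
  have h3 : HasDerivAt (fun y => 2 * (deriv ψ y * deriv φ y) - 2 * v y * (ψ y * φ y))
      (2 * (deriv (deriv ψ) x * deriv φ x + deriv ψ x * deriv (deriv φ) x)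
        - (2 * deriv v x * (ψ x * φ x) + 2 * v x * (deriv ψ x * φ x + ψ x * deriv φ x))) x :=
    (((hψ' x).hasDerivAt.mul (hφ' x).hasDerivAt).const_mul 2).sub
      (((hv x).hasDerivAt.const_mul 2).mul ((hψ x).hasDerivAt.mul (hφ x).hasDerivAt))
  rw [deriv_deriv_mul_of_solutions hψ hφ hψ' hφ' hψ'' hφ'', h3.deriv,
    deriv_fun_mul (hψ x) (hφ x), hψ'' x, hφ'' x]
  ring

theorem kdvK_mul_of_solutions_eq_zero (hv : Differentiable ℝ v)
    (hψ : Differentiable ℝ ψ) (hφ : Differentiable ℝ φ)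
    (hψ' : Differentiable ℝ (deriv ψ)) (hφ' : Differentiable ℝ (deriv φ))
    (hψ'' : ∀ x, deriv (deriv ψ) x = -(v x * ψ x)) (hφ'' : ∀ x, deriv (deriv φ) x = -(v x * φ x))
    (x : ℝ) :
    kdvK v (fun y => ψ y * φ y) x = 0 := by
  rw [kdvK, deriv_deriv_deriv_mul_of_solutions hv hψ hφ hψ' hφ' hψ'' hφ'' x,
    deriv_fun_mul (hv x) ((hψ x).fun_mul (hφ x))]
  ring

end ProductOfSolutions

section ReductionOfOrder

variable {u w : ℝ → ℝ}

/-- `deriv` is `0` where a function is not differentiable, so `w' = u⁻² ≠ 0` forces differentiability. -/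
theorem differentiable_of_deriv_eq_inv_sq (hu0 : ∀ x, u x ≠ 0)
    (hw : ∀ x, deriv w x = (u x ^ 2)⁻¹) : Differentiable ℝ w :=
  fun x => differentiableAt_of_deriv_ne_zero (by simp [hw x, hu0 x])

theorem deriv_mul_of_deriv_eq_inv_sq (hu : Differentiable ℝ u) (hu0 : ∀ x, u x ≠ 0)
    (hw : ∀ x, deriv w x = (u x ^ 2)⁻¹) :
    deriv (fun y => u y * w y) = fun x => deriv u x * w x + (u x)⁻¹ := by
  funext x
  rw [deriv_fun_mul (hu x) (differentiable_of_deriv_eq_inv_sq hu0 hw x), hw x]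
  field_simp [hu0 x]

theorem differentiable_deriv_mul_of_deriv_eq_inv_sq (hu : Differentiable ℝ u)
    (hu' : Differentiable ℝ (deriv u)) (hu0 : ∀ x, u x ≠ 0)
    (hw : ∀ x, deriv w x = (u x ^ 2)⁻¹) : Differentiable ℝ (deriv fun y => u y * w y) := by
  rw [deriv_mul_of_deriv_eq_inv_sq hu hu0 hw]
  exact (hu'.mul (differentiable_of_deriv_eq_inv_sq hu0 hw)).add (hu.inv hu0)

theorem deriv_deriv_mul_of_deriv_eq_inv_sq (hu : Differentiable ℝ u)
    (hu' : Differentiable ℝ (deriv u)) (hu0 : ∀ x, u x ≠ 0)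
    (hw : ∀ x, deriv w x = (u x ^ 2)⁻¹) (x : ℝ) :
    deriv (deriv fun y => u y * w y) x = deriv (deriv u) x * w x := by
  have h : HasDerivAt (fun y => deriv u y * w y + (u y)⁻¹)
      (deriv (deriv u) x * w x + deriv u x * (u x ^ 2)⁻¹ + -(deriv u x) / u x ^ 2) x :=
    (((hu' x).hasDerivAt.mul (hw x ▸ (differentiable_of_deriv_eq_inv_sq hu0 hw x).hasDerivAt)).add
      ((hu x).hasDerivAt.inv (hu0 x)))
  rw [deriv_mul_of_deriv_eq_inv_sq hu hu0 hw, h.deriv]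
  ring

end ReductionOfOrder

theorem u_sq_w_in_kernel_K_general
    (u w : ℝ → ℝ) (hu : ContDiff ℝ (⊤ : ℕ∞) u)
    (hu0 : ∀ x : ℝ, u x ≠ 0)
    (hw' : ∀ x : ℝ, deriv w x = (u x ^ 2)⁻¹)
    (v : ℝ → ℝ) (hv : ∀ x : ℝ, v x = -(deriv (deriv u) x) / u x) :
    ∀ x : ℝ,
      (1/4) * deriv (deriv (deriv (fun y => u y ^ 2 * w y))) x
        + (1/2) * (v x * deriv (fun y => u y ^ 2 * w y) x
            + deriv (fun y => v y * (u y ^ 2 * w y)) x) = 0 := by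
  have hu' := (contDiff_infty_iff_deriv.mp hu).2
  have hu'' := (contDiff_infty_iff_deriv.mp hu').2
  have hdu : Differentiable ℝ u := hu.differentiable (by simp)
  have hdu' : Differentiable ℝ (deriv u) := hu'.differentiable (by simp)
  have hv_eq : v = fun x => -(deriv (deriv u) x) / u x := funext hv
  have hdv : Differentiable ℝ v := hv_eq ▸ (hu''.differentiable (by simp)).neg.div hdu hu0
  have hu_sol : ∀ x, deriv (deriv u) x = -(v x * u x) := fun x => by
    rw [hv x]; field_simp [hu0 x]
  have huw_sol : ∀ x, deriv (deriv fun y => u y * w y) x = -(v x * (u x * w x)) := fun x => by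
    rw [deriv_deriv_mul_of_deriv_eq_inv_sq hdu hdu' hu0 hw' x, hu_sol x]; ring
  have hG : ∀ y, u y ^ 2 * w y = u y * (u y * w y) := fun y => by ring
  intro x
  simp only [hG]
  exact kdvK_mul_of_solutions_eq_zero hdv hdu
    (hdu.fun_mul (differentiable_of_deriv_eq_inv_sq hu0 hw')) hdu'
    (differentiable_deriv_mul_of_deriv_eq_inv_sq hdu hdu' hu0 hw') hu_sol huw_sol x

/-- With `v = -u''/u` (`u` smooth and nonvanishing) and `w' = u⁻²`,
the function `G = u² w` lies in the kernel of `K`: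
`(1/4)(u²w)''' + (1/2)(v (u²w)' + (v u²w)') = 0` pointwise on ℝ. -/
theorem u_sq_w_in_kernel_K
    (u w : ℝ → ℝ) (hu : ContDiff ℝ (⊤ : ℕ∞) u) (hw : ContDiff ℝ (⊤ : ℕ∞) w)
    (hu0 : ∀ x : ℝ, u x ≠ 0)
    (hw' : ∀ x : ℝ, deriv w x = (u x ^ 2)⁻¹)
    (v : ℝ → ℝ) (hv : ∀ x : ℝ, v x = -(deriv (deriv u) x) / u x) :
    ∀ x : ℝ,
      (1/4) * deriv (deriv (deriv (fun y => u y ^ 2 * w y))) x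
        + (1/2) * (v x * deriv (fun y => u y ^ 2 * w y) x
            + deriv (fun y => v y * (u y ^ 2 * w y)) x) = 0 :=
  u_sq_w_in_kernel_K_general u w hu hu0 hw' v hv
end

section
/- Let u, w, z : ℝ → ℝ be smooth with u nonvanishing, suppose w' = u⁻² and z' = u⁻²·w, and set v = -u''/u. Then G = u²·z lies in the kernel of the operator K, i.e. (1/4)(u²z)''' + (1/2)(v·(u²z)' + (v·u²z)') = 0 pointwise on ℝ. -/
section

variable {𝕜 : Type*} [NontriviallyNormedField 𝕜] {u f : 𝕜 → 𝕜}

theorem HasDerivAt.sq_mul {u' f' x : 𝕜} (hu : HasDerivAt u u' x) (hf : HasDerivAt f f' x) :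
    HasDerivAt (fun y => u y ^ 2 * f y) (2 * u x * u' * f x + u x ^ 2 * f') x :=
  ((hu.fun_pow 2).fun_mul hf).congr_deriv (by push_cast; ring)

theorem deriv_sq_mul (hu : Differentiable 𝕜 u) (hf : Differentiable 𝕜 f) :
    deriv (fun y => u y ^ 2 * f y) = fun y => 2 * u y * deriv u y * f y + u y ^ 2 * deriv f y :=
  funext fun x => ((hu x).hasDerivAt.sq_mul (hf x).hasDerivAt).deriv

theorem ContDiff.differentiable_deriv_deriv (h : ContDiff 𝕜 3 f) :
    Differentiable 𝕜 (deriv (deriv f)) :=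
  (h.deriv' (n := 2)).differentiable_deriv_two

end

theorem kdvK_sq_mul {u f : ℝ → ℝ} (hu : ContDiff ℝ 3 u) (hu0 : ∀ x, u x ≠ 0)
    (hf : ContDiff ℝ 3 f) (x : ℝ) :
    kdvK (fun y => -deriv (deriv u) y / u y) (fun y => u y ^ 2 * f y) x
      = (1/4) * (u x ^ 2)⁻¹
          * deriv (fun y => u y ^ 2 * deriv (fun t => u t ^ 2 * deriv f t) y) x := by
  have hu1 y := (hu.differentiable (by norm_num) y).hasDerivAt
  have hu2 y := ((hu.of_le (by norm_num)).differentiable_deriv_two y).hasDerivAt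
  have hu3 y := (hu.differentiable_deriv_deriv y).hasDerivAt
  have hf1 y := (hf.differentiable (by norm_num) y).hasDerivAt
  have hf2 y := ((hf.of_le (by norm_num)).differentiable_deriv_two y).hasDerivAt
  have hf3 y := (hf.differentiable_deriv_deriv y).hasDerivAt
  have hG1 : deriv (fun y => u y ^ 2 * f y)
      = fun y => 2 * u y * deriv u y * f y + u y ^ 2 * deriv f y :=
    funext fun y => ((hu1 y).sq_mul (hf1 y)).deriv
  have hG2 : deriv (fun y => 2 * u y * deriv u y * f y + u y ^ 2 * deriv f y)
      = fun y => 2 * (deriv u y * deriv u y + u y * deriv (deriv u) y) * f y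
        + (4 * u y * deriv u y * deriv f y + u y ^ 2 * deriv (deriv f) y) :=
    funext fun y => (((((hu1 y).const_mul 2).fun_mul (hu2 y)).fun_mul (hf1 y)).fun_add
      ((hu1 y).sq_mul (hf2 y)) |>.congr_deriv (by ring)).deriv
  have hG3 := (((((hu2 x).fun_mul (hu2 x)).fun_add ((hu1 x).fun_mul (hu3 x))).const_mul 2).fun_mul
    (hf1 x)).fun_add (((((hu1 x).const_mul 4).fun_mul (hu2 x)).fun_mul (hf2 x)).fun_add
    ((hu1 x).sq_mul (hf3 x)))
  have hvG : (fun y => -deriv (deriv u) y / u y * (u y ^ 2 * f y))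
      = fun y => -(deriv (deriv u) y * (u y * f y)) := by
    funext y
    field_simp [hu0 y]
  have hvG1 := ((hu3 x).fun_mul ((hu1 x).fun_mul (hf1 x))).fun_neg
  have hg1 : deriv (fun y => u y ^ 2 * deriv f y)
      = fun y => 2 * u y * deriv u y * deriv f y + u y ^ 2 * deriv (deriv f) y :=
    funext fun y => ((hu1 y).sq_mul (hf2 y)).deriv
  have hUg1 := (hu1 x).sq_mul (((((hu1 x).const_mul 2).fun_mul (hu2 x)).fun_mul (hf2 x)).fun_add
    ((hu1 x).sq_mul (hf3 x)))
  unfold kdvK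
  rw [hG1, hG2, hG3.deriv, hvG, hvG1.deriv, hg1, hUg1.deriv]
  field_simp [hu0 x]
  ring

theorem u_sq_z_in_kernel_K_general
    (u w z : ℝ → ℝ) (hu : ContDiff ℝ (⊤ : ℕ∞) u)
    (hz : ContDiff ℝ (⊤ : ℕ∞) z)
    (hu0 : ∀ x : ℝ, u x ≠ 0)
    (hw' : ∀ x : ℝ, deriv w x = (u x ^ 2)⁻¹)
    (hz' : ∀ x : ℝ, deriv z x = (u x ^ 2)⁻¹ * w x)
    (v : ℝ → ℝ) (hv : ∀ x : ℝ, v x = -(deriv (deriv u) x) / u x) :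
    ∀ x : ℝ,
      (1/4) * deriv (deriv (deriv (fun y => u y ^ 2 * z y))) x
        + (1/2) * (v x * deriv (fun y => u y ^ 2 * z y) x
            + deriv (fun y => v y * (u y ^ 2 * z y)) x) = 0 := by
  intro x
  obtain rfl : v = fun y => -deriv (deriv u) y / u y := funext hv
  have h3 : ((3 : ℕ∞) : WithTop ℕ∞) ≤ ((⊤ : ℕ∞) : WithTop ℕ∞) := by exact_mod_cast le_top
  have hz_w : (fun t => u t ^ 2 * deriv z t) = w :=
    funext fun t => by rw [hz']; field_simp [hu0 t]
  have hw_one : (fun t => u t ^ 2 * deriv w t) = fun _ => 1 :=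
    funext fun t => by rw [hw']; field_simp [hu0 t]
  have hK := kdvK_sq_mul (hu.of_le h3) hu0 (hz.of_le h3) x
  rwa [hz_w, hw_one, deriv_const, mul_zero] at hK

/-- With `v = -u''/u` (`u` smooth and nonvanishing), `w' = u⁻²` and
`z' = u⁻² w`, the function `G = u² z` lies in the kernel of `K`:
`(1/4)(u²z)''' + (1/2)(v (u²z)' + (v u²z)') = 0` pointwise on ℝ. -/
theorem u_sq_z_in_kernel_K
    (u w z : ℝ → ℝ) (hu : ContDiff ℝ (⊤ : ℕ∞) u) (hw : ContDiff ℝ (⊤ : ℕ∞) w)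
    (hz : ContDiff ℝ (⊤ : ℕ∞) z)
    (hu0 : ∀ x : ℝ, u x ≠ 0)
    (hw' : ∀ x : ℝ, deriv w x = (u x ^ 2)⁻¹)
    (hz' : ∀ x : ℝ, deriv z x = (u x ^ 2)⁻¹ * w x)
    (v : ℝ → ℝ) (hv : ∀ x : ℝ, v x = -(deriv (deriv u) x) / u x) :
    ∀ x : ℝ,
      (1/4) * deriv (deriv (deriv (fun y => u y ^ 2 * z y))) x
        + (1/2) * (v x * deriv (fun y => u y ^ 2 * z y) x
            + deriv (fun y => v y * (u y ^ 2 * z y)) x) = 0 :=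
  u_sq_z_in_kernel_K_general u w z hu hz hu0 hw' hz' v hv
end

section
/- Let u : ℝ × ℝ → ℝ be smooth and nonvanishing, set v = -u_xx/u, and suppose u satisfies the negative-order KdV equation v_t = 2u·u_x. Assume moreover that v_x is nonvanishing on an open set Ω ⊆ ℝ × ℝ. Then on Ω the function v satisfies ( v_{txx}/v_x )_x + 4( v·v_t/v_x )_x + 2v_t = 0. -/
/-!
Fix `t` and write `U = u(·, t)`, so that `v = -U''/U`, i.e. `U'' + vU = 0`. The square `ψ = U²`
of such a solution lies in the kernel of `K = ∂³ + 4v∂ + 2vₓ`. The negative KdV equation says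
`v_t = ψ'`, so `K ψ = 0` reads `v_txx + 4 v v_t = -2 vₓ U²`; dividing by `vₓ` and differentiating
in `x` gives `(v_txx/vₓ)ₓ + 4 (v v_t/vₓ)ₓ = -2ψ' = -2 v_t`.
-/

/-- The operator `K` of the paper. -/
noncomputable def kdvSecondHamiltonian (v ψ : ℝ → ℝ) (x : ℝ) : ℝ :=
  deriv (deriv (deriv ψ)) x + 4 * v x * deriv ψ x + 2 * deriv v x * ψ x

section

variable {U : ℝ → ℝ}

theorem deriv_sq_eq (hU : Differentiable ℝ U) :
    deriv (fun y => U y ^ 2) = fun y => 2 * U y * deriv U y :=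
  funext fun y => by rw [deriv_fun_pow (hU y)]; ring

theorem kdvSecondHamiltonian_sq_eq_zero (hU : ContDiff ℝ 3 U) {x : ℝ} (hx : U x ≠ 0) :
    kdvSecondHamiltonian (fun y => -deriv (deriv U) y / U y) (fun y => U y ^ 2) x = 0 := by
  have hU1 : ContDiff ℝ 2 (deriv U) := hU.iterate_deriv' 2 1
  have hU2 : ContDiff ℝ 1 (deriv (deriv U)) := hU.iterate_deriv' 1 2
  have hd0 : Differentiable ℝ U := hU.differentiable (by norm_num)
  have hd1 : Differentiable ℝ (deriv U) := hU1.differentiable (by norm_num)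
  have hd2 : Differentiable ℝ (deriv (deriv U)) := hU2.differentiable (by norm_num)
  have hψ1 := deriv_sq_eq hd0
  have hψ2 : deriv (fun y => 2 * U y * deriv U y)
      = fun y => 2 * deriv U y * deriv U y + 2 * U y * deriv (deriv U) y :=
    funext fun y => (((hd0 y).hasDerivAt.const_mul 2).mul (hd1 y).hasDerivAt).deriv
  have hψ3 : deriv (fun y => 2 * deriv U y * deriv U y + 2 * U y * deriv (deriv U) y) x
      = 2 * deriv (deriv U) x * deriv U x + 2 * deriv U x * deriv (deriv U) x
        + (2 * deriv U x * deriv (deriv U) x + 2 * U x * deriv (deriv (deriv U)) x) :=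
    ((((hd1 x).hasDerivAt.const_mul 2).mul (hd1 x).hasDerivAt).add
      (((hd0 x).hasDerivAt.const_mul 2).mul (hd2 x).hasDerivAt)).deriv
  have hv : deriv (fun y => -deriv (deriv U) y / U y) x
      = (-deriv (deriv (deriv U)) x * U x - -deriv (deriv U) x * deriv U x) / U x ^ 2 :=
    ((hd2 x).hasDerivAt.neg.div (hd0 x).hasDerivAt hx).deriv
  simp only [kdvSecondHamiltonian, hψ1, hψ2, hψ3, hv]
  field_simp
  ring

theorem fuchssteiner_of_vt_eq_deriv_sq (hU : ContDiff ℝ 4 U) {S : Set ℝ} (hS : IsOpen S)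
    (hU0 : ∀ y ∈ S, U y ≠ 0)
    (hvx : ∀ y ∈ S, deriv (fun z => -deriv (deriv U) z / U z) y ≠ 0) {x : ℝ} (hx : x ∈ S) :
    let v := fun y => -deriv (deriv U) y / U y
    let ψ := fun y => U y ^ 2
    deriv (fun y => deriv (deriv (deriv ψ)) y / deriv v y) x
      + 4 * deriv (fun y => v y * deriv ψ y / deriv v y) x + 2 * deriv ψ x = 0 := by
  intro v ψ
  have hψ : ContDiff ℝ 4 ψ := hU.pow 2
  have hv : ContDiffOn ℝ 2 v S :=
    ((hU.iterate_deriv' 2 2).contDiffOn.neg.div (hU.of_le (by norm_num)).contDiffOn hU0)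
  have hvx' : DifferentiableAt ℝ (deriv v) x :=
    ((hv.deriv_of_isOpen hS (by norm_num : (1 : WithTop ℕ∞) + 1 ≤ 2)).differentiableOn
      one_ne_zero x hx).differentiableAt (hS.mem_nhds hx)
  have hψ3 : DifferentiableAt ℝ (deriv (deriv (deriv ψ))) x :=
    ((hψ.iterate_deriv' 1 3).differentiable (by norm_num)) x
  have hvψ : DifferentiableAt ℝ (fun y => v y * deriv ψ y) x :=
    ((hv.differentiableOn (by norm_num) x hx).differentiableAt (hS.mem_nhds hx)).mul
      ((hψ.iterate_deriv' 3 1).differentiable (by norm_num) x)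
  have hsum : (fun y => deriv (deriv (deriv ψ)) y / deriv v y + 4 * (v y * deriv ψ y / deriv v y))
      =ᶠ[nhds x] fun y => -2 * U y ^ 2 := by
    filter_upwards [hS.mem_nhds hx] with y hy
    have hK := kdvSecondHamiltonian_sq_eq_zero (hU.of_le (by norm_num)) (hU0 y hy)
    rw [kdvSecondHamiltonian] at hK
    have hvy : deriv v y ≠ 0 := hvx y hy
    field_simp
    linear_combination hK
  have hF := hψ3.fun_div hvx' (hvx x hx)
  have hG := (hvψ.fun_div hvx' (hvx x hx)).const_mul 4
  have hderiv := hsum.deriv_eq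
  rw [deriv_fun_add hF hG, deriv_const_mul_field, deriv_const_mul_field] at hderiv
  linear_combination hderiv

end

/-- If `u : ℝ × ℝ → ℝ` is smooth and nonvanishing, `v = -u_xx/u`
satisfies the negative-order KdV equation `v_t = 2 u u_x`, and `v_x` is
nonvanishing on an open set `Ω`, then on `Ω` the function `v` satisfies
`(v_txx/v_x)_x + 4 (v v_t/v_x)_x + 2 v_t = 0`. -/
theorem negKdV_to_fuchssteiner_equation
    (u : ℝ × ℝ → ℝ) (hu : ContDiff ℝ (⊤ : ℕ∞) u)
    (hu0 : ∀ p : ℝ × ℝ, u p ≠ 0) :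
    let v : ℝ → ℝ → ℝ := fun x t => -(deriv (deriv (fun y => u (y, t))) x) / u (x, t)
    let vt : ℝ → ℝ → ℝ := fun x t => deriv (fun s => v x s) t
    let vx : ℝ → ℝ → ℝ := fun x t => deriv (fun y => v y t) x
    let vtxx : ℝ → ℝ → ℝ := fun x t => deriv (deriv (fun y => vt y t)) x
    ∀ (Ω : Set (ℝ × ℝ)), IsOpen Ω →
      (∀ (x t : ℝ), vt x t = 2 * u (x, t) * deriv (fun y => u (y, t)) x) →
      (∀ p ∈ Ω, vx p.1 p.2 ≠ 0) →
      ∀ p ∈ Ω,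
        deriv (fun y => vtxx y p.2 / vx y p.2) p.1
          + 4 * deriv (fun y => v y p.2 * vt y p.2 / vx y p.2) p.1
          + 2 * vt p.1 p.2 = 0 := by
  intro v vt vx vtxx Ω hΩ hvt hvx p hp
  have hU : ContDiff ℝ 4 (fun y => u (y, p.2)) :=
    (hu.of_le (WithTop.coe_le_coe.mpr le_top)).comp (contDiff_id.prodMk contDiff_const)
  have hvt_eq : (fun y => vt y p.2) = deriv (fun y => u (y, p.2) ^ 2) := by
    rw [deriv_sq_eq (hU.differentiable (by norm_num))]
    exact funext fun y => hvt y p.2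
  have key := fuchssteiner_of_vt_eq_deriv_sq hU (hΩ.preimage (by fun_prop))
    (fun y _ => hu0 (y, p.2)) (fun y hy => hvx (y, p.2) hy) hp
  dsimp only at key
  rwa [← hvt_eq] at key
end

section
/- Let c > 0 and ξ₀ ∈ ℝ, and define u(x,t) = -√(2c)/(x - ct + ξ₀) (respectively u(x,t) = +√(2c)/(x - ct + ξ₀)). Then on the open set { (x,t) : x - ct + ξ₀ ≠ 0 }, u is smooth, nonvanishing, and satisfies the negative-order KdV equation (-u_xx/u)_t = 2u·u_x. Moreover u is unbounded as x - ct → -ξ₀. -/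
/-!
Write `ξ = x - ct + ξ₀` and `A = ∓√(2c)`, so that `u = U(ξ)` with `U ξ = A / ξ`. For any traveling
wave `u = U(x - ct + ξ₀)`, the left-hand side `(-u_xx/u)_t` equals `-c (-U''/U)'(ξ)`, so the
equation reduces to the ODE `-c (-U''/U)' = 2 U U'`. For the pole profile `-U''/U = -2/ξ²`, hence
both sides equal `-4c/ξ³` exactly because `A² = 2c`. Blow-up is that of `1/ξ` at `ξ = 0`.
-/

open Filter Topology

lemma deriv_comp_sub_add (f : ℝ → ℝ) (b a x : ℝ) :
    deriv (fun y => f (y - b + a)) x = deriv f (x - b + a) := by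
  simp only [sub_add_eq_add_sub, add_sub_assoc, deriv_comp_add_const]

lemma hasDerivAt_comp_sub_mul_add {G : ℝ → ℝ} {G' : ℝ} {c ξ₀ x t : ℝ}
    (hG : HasDerivAt G G' (x - c * t + ξ₀)) :
    HasDerivAt (fun s => G (x - c * s + ξ₀)) (-c * G') t := by
  have hξ : HasDerivAt (fun s => x - c * s + ξ₀) (-c) t := by
    simpa using (((hasDerivAt_id t).const_mul c).const_sub x).add_const ξ₀
  exact (hG.comp t hξ).congr_deriv (mul_comm _ _)

theorem negKdV_of_travelingWave (U : ℝ → ℝ) {c ξ₀ x t G' : ℝ}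
    (hG : HasDerivAt (fun ξ => -deriv (deriv U) ξ / U ξ) G' (x - c * t + ξ₀))
    (hODE : -c * G' = 2 * U (x - c * t + ξ₀) * deriv U (x - c * t + ξ₀)) :
    deriv (fun s => -deriv (deriv fun y => U (y - c * s + ξ₀)) x / U (x - c * s + ξ₀)) t
      = 2 * U (x - c * t + ξ₀) * deriv (fun y => U (y - c * t + ξ₀)) x := by
  have hshift : ∀ s, deriv (deriv fun y => U (y - c * s + ξ₀)) x
      = deriv (deriv U) (x - c * s + ξ₀) := fun s => by
    simp only [funext (deriv_comp_sub_add U (c * s) ξ₀), deriv_comp_sub_add]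
  simp only [hshift, deriv_comp_sub_add]
  rw [(hasDerivAt_comp_sub_mul_add hG).deriv, hODE]

lemma deriv_deriv_const_div_id (A ξ : ℝ) : deriv (deriv fun ξ : ℝ => A / ξ) ξ = 2 * A / ξ ^ 3 := by
  have h : (deriv fun ξ : ℝ => A / ξ) = fun ξ => -A * ξ ^ (-2 : ℤ) := by
    funext ξ; rw [deriv_const_div_id, zpow_neg, zpow_ofNat, div_eq_mul_inv]
  rw [h, deriv_const_mul_field, deriv_zpow]
  rw [show (-2 : ℤ) - 1 = -3 by norm_num, zpow_neg, zpow_ofNat]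
  push_cast
  ring

-- An identity of functions: at `ξ = 0` both sides are `0` by the convention `x / 0 = 0`.
lemma neg_deriv_deriv_div_self_const_div_id {A : ℝ} (hA : A ≠ 0) :
    (fun ξ => -deriv (deriv fun ξ : ℝ => A / ξ) ξ / (A / ξ)) = fun ξ => -2 / ξ ^ 2 := by
  funext ξ
  rw [deriv_deriv_const_div_id]
  rcases eq_or_ne ξ 0 with rfl | hξ
  · simp
  · field_simp

lemma hasDerivAt_neg_two_div_sq {ξ : ℝ} (hξ : ξ ≠ 0) :
    HasDerivAt (fun ξ : ℝ => -2 / ξ ^ 2) (4 / ξ ^ 3) ξ := by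
  refine ((hasDerivAt_const ξ (-2 : ℝ)).fun_div (hasDerivAt_pow 2 ξ) (pow_ne_zero 2 hξ)).congr_deriv ?_
  field_simp
  ring

lemma const_div_id_reducedODE {A c ξ : ℝ} (hA2 : A ^ 2 = 2 * c) (hξ : ξ ≠ 0) :
    -c * (4 / ξ ^ 3) = 2 * (A / ξ) * (-A / ξ ^ 2) := by
  field_simp
  linear_combination 2 * hA2

lemma tendsto_abs_const_div_sub_nhdsNE {A : ℝ} (hA : A ≠ 0) (a : ℝ) :
    Tendsto (fun x => |A / (x - a)|) (𝓝[≠] a) atTop := by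
  have hshift : Tendsto (fun x => x - a) (𝓝[≠] a) (𝓝[≠] 0) :=
    tendsto_nhdsWithin_iff.2
      ⟨tendsto_nhdsWithin_of_tendsto_nhds ((continuous_sub_right a).tendsto' a 0 (sub_self a)),
        eventually_nhdsWithin_of_forall fun x hx => sub_ne_zero.2 hx⟩
  have := (tendsto_norm_inv_nhdsNE_zero_atTop.comp hshift).const_mul_atTop (abs_pos.2 hA)
  simpa only [abs_mul, div_eq_mul_inv, Function.comp_def, Real.norm_eq_abs, abs_inv] using this

lemma sq_sign_mul_sqrt {ε a : ℝ} (hε : ε = -1 ∨ ε = 1) (ha : 0 ≤ a) : (ε * Real.sqrt a) ^ 2 = a := by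
  rcases hε with rfl | rfl <;> simp [Real.sq_sqrt ha]

/-- For `c > 0` and any `ξ₀`, the functions
`u(x,t) = ∓√(2c)/(x - ct + ξ₀)` are smooth, nonvanishing, and satisfy the
negative-order KdV equation `(-u_xx/u)_t = 2 u u_x` on the open set where
`x - ct + ξ₀ ≠ 0`; moreover `u` is unbounded as `x - ct → -ξ₀`. -/
theorem unbounded_breaking_wave_solutions
    (c : ℝ) (hc : 0 < c) (ξ₀ : ℝ) (ε : ℝ) (hε : ε = -1 ∨ ε = 1) :
    let u : ℝ → ℝ → ℝ := fun x t => ε * Real.sqrt (2 * c) / (x - c * t + ξ₀)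
    let S : Set (ℝ × ℝ) := {p | p.1 - c * p.2 + ξ₀ ≠ 0}
    IsOpen S
    ∧ ContDiffOn ℝ (⊤ : ℕ∞) (fun p : ℝ × ℝ => u p.1 p.2) S
    ∧ (∀ p ∈ S, u p.1 p.2 ≠ 0)
    ∧ (∀ p ∈ S,
        deriv (fun s => -(deriv (deriv (fun y => u y s)) p.1) / u p.1 s) p.2
          = 2 * u p.1 p.2 * deriv (fun y => u y p.2) p.1)
    ∧ (∀ t : ℝ, Filter.Tendsto (fun x => |u x t|)
        (nhdsWithin (c * t - ξ₀) {x | x ≠ c * t - ξ₀}) Filter.atTop) := by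
  intro u S
  set A := ε * Real.sqrt (2 * c)
  have hA2 : A ^ 2 = 2 * c := sq_sign_mul_sqrt hε (by positivity)
  have hA : A ≠ 0 := fun h => by simp [h] at hA2; linarith
  have hξ : ContDiff ℝ (⊤ : ℕ∞) fun p : ℝ × ℝ => p.1 - c * p.2 + ξ₀ := by fun_prop
  refine ⟨isOpen_ne.preimage hξ.continuous, contDiffOn_const.div hξ.contDiffOn fun p hp => hp,
    fun p hp => div_ne_zero hA hp, fun p hp => ?_, fun t => ?_⟩
  · have hG := neg_deriv_deriv_div_self_const_div_id hA ▸ hasDerivAt_neg_two_div_sq hp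
    refine negKdV_of_travelingWave (fun ξ => A / ξ) hG ?_
    rw [deriv_const_div_id]
    exact const_div_id_reducedODE hA2 hp
  · refine (tendsto_abs_const_div_sub_nhdsNE hA (c * t - ξ₀)).congr fun x => ?_
    rw [← sub_add]
end

section
/- Let c < 0 and g > 0, and define u(x,t) = √(2|c|g) · sech( √g · (x - ct) ) (respectively its negative). Then u is smooth, nonvanishing on all of ℝ × ℝ, and satisfies the negative-order KdV equation (-u_xx/u)_t = 2u·u_x; moreover u(x,t) → 0 as |x - ct| → ∞. Thus the equation possesses classical soliton solutions. -/
/-!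
For a traveling wave `u x t = U (x - c t)` one has `-u_xx / u = -U'' / U`. If the profile solves
the Hamiltonian equation `U'' = g U + U³ / c`, this quotient is `-g - U² / c`, and its
`t`-derivative `-2 U U' · (-c) / c` is exactly `2 u u_x`. The profile `A sech (k ξ)` solves that
equation with `g = k²` precisely when `A² = -2 c k²`, because `sech'' = sech - 2 sech³`.
-/

open Real Filter Topology

lemma deriv_const_mul_comp_mul_left (A k : ℝ) (f : ℝ → ℝ) :
    deriv (fun ξ => A * f (k * ξ)) = fun ξ => A * k * deriv f (k * ξ) := by
  rw [deriv_const_mul_field']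
  funext ξ
  rw [deriv_comp_mul_left, smul_eq_mul, mul_assoc]

lemma hasDerivAt_inv_cosh (x : ℝ) :
    HasDerivAt (fun x => (cosh x)⁻¹) (-(sinh x / cosh x ^ 2)) x := by
  simpa [div_eq_mul_inv] using (hasDerivAt_cosh x).fun_inv (cosh_pos x).ne'

lemma deriv_inv_cosh : deriv (fun x => (cosh x)⁻¹) = fun x => -(sinh x / cosh x ^ 2) :=
  funext fun x => (hasDerivAt_inv_cosh x).deriv

lemma deriv_deriv_inv_cosh (x : ℝ) :
    deriv (deriv fun x => (cosh x)⁻¹) x = (cosh x)⁻¹ - 2 * (cosh x)⁻¹ ^ 3 := by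
  have h := ((hasDerivAt_sinh x).fun_div ((hasDerivAt_cosh x).fun_pow 2)
    (pow_ne_zero 2 (cosh_pos x).ne')).fun_neg
  rw [deriv_inv_cosh, h.deriv]
  field_simp
  rw [sinh_sq]
  ring

lemma deriv_deriv_sech_profile {A k c : ℝ} (hc : c ≠ 0) (hA : A ^ 2 = -2 * c * k ^ 2)
    (ξ : ℝ) :
    deriv (deriv fun ξ => A * (cosh (k * ξ))⁻¹) ξ
      = k ^ 2 * (A * (cosh (k * ξ))⁻¹) + (A * (cosh (k * ξ))⁻¹) ^ 3 / c := by
  rw [deriv_const_mul_comp_mul_left A k (fun x => (cosh x)⁻¹),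
    deriv_const_mul_comp_mul_left (A * k) k]
  dsimp only
  rw [deriv_deriv_inv_cosh, mul_pow, pow_succ A 2, hA]
  field_simp
  ring

lemma tendsto_cosh_atTop : Tendsto cosh atTop atTop := by
  refine tendsto_atTop_mono (fun x => ?_) (tendsto_exp_atTop.atTop_div_const two_pos)
  rw [cosh_eq]
  linarith [exp_pos (-x)]

lemma tendsto_sech_profile_comap_abs {k : ℝ} (hk : k ≠ 0) (A : ℝ) :
    Tendsto (fun ξ => A * (cosh (k * ξ))⁻¹) (comap (|·|) atTop) (𝓝 0) := by
  have h : Tendsto (fun ξ : ℝ => cosh (k * ξ)) (comap (|·|) atTop) atTop := by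
    have := tendsto_cosh_atTop.comp
      ((tendsto_comap (f := (|·| : ℝ → ℝ))).const_mul_atTop (abs_pos.2 hk))
    refine this.congr fun ξ => ?_
    simp only [Function.comp, ← abs_mul, cosh_abs]
  simpa using h.inv_tendsto_atTop.const_mul A

lemma contDiff_sech_profile (A k : ℝ) (n : WithTop ℕ∞) :
    ContDiff ℝ n fun ξ => A * (cosh (k * ξ))⁻¹ :=
  contDiff_const.mul ((contDiff_cosh.comp (contDiff_const.mul contDiff_id)).inv
    fun _ => (cosh_pos _).ne')

def IsNegKdVSolution (u : ℝ → ℝ → ℝ) : Prop :=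
  ∀ x t : ℝ, deriv (fun s => -(deriv (deriv (fun y => u y s)) x) / u x s) t
    = 2 * u x t * deriv (fun y => u y t) x

section TravelingWave

variable {U : ℝ → ℝ}

lemma contDiff_travelingWave {n : WithTop ℕ∞} (hU : ContDiff ℝ n U) (c : ℝ) :
    ContDiff ℝ n fun p : ℝ × ℝ => U (p.1 - c * p.2) :=
  hU.comp (by fun_prop)

lemma tendsto_travelingWave {l : Filter ℝ} (hU : Tendsto U (comap (|·|) atTop) l) (b : ℝ) :
    Tendsto (fun x => U (x - b)) (comap (fun x => |x - b|) atTop) l := by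
  have hfilter : comap (fun x => |x - b|) atTop = comap (· - b) (comap (|·|) atTop) := by
    rw [comap_comap]; rfl
  rw [hfilter]
  exact hU.comp tendsto_comap

lemma deriv_fun_comp_sub_const (b : ℝ) : deriv (fun y => U (y - b)) = fun y => deriv U (y - b) :=
  funext fun _ => deriv_comp_sub_const ..

lemma isNegKdVSolution_travelingWave {c g : ℝ} (hc : c ≠ 0) (hU : Differentiable ℝ U)
    (hU0 : ∀ ξ, U ξ ≠ 0) (hODE : ∀ ξ, deriv (deriv U) ξ = g * U ξ + U ξ ^ 3 / c) :
    IsNegKdVSolution fun x t => U (x - c * t) := by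
  intro x t
  have hratio : (fun s => -(deriv (deriv fun y => U (y - c * s)) x) / U (x - c * s))
      = fun s => -g - U (x - c * s) ^ 2 / c := by
    funext s
    rw [deriv_fun_comp_sub_const, deriv_comp_sub_const, hODE]
    field_simp [hU0 (x - c * s)]
    ring
  have hwave : HasDerivAt (fun s => U (x - c * s)) (deriv U (x - c * t) * -c) t := by
    refine (hU _).hasDerivAt.comp t ?_
    simpa using ((hasDerivAt_id t).const_mul c).const_sub x
  have hrhs : HasDerivAt (fun s => -g - U (x - c * s) ^ 2 / c)
      (2 * U (x - c * t) * deriv U (x - c * t)) t := by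
    refine (((hwave.fun_pow 2).div_const c).const_sub (-g)).congr_deriv ?_
    field_simp
    ring
  rw [hratio, hrhs.deriv, deriv_comp_sub_const]

end TravelingWave

/-- For `c < 0`, `g > 0`, the functions
`u(x,t) = ±√(2|c|g) sech(√g (x - ct))` are smooth and nonvanishing on ℝ × ℝ,
satisfy the negative-order KdV equation `(-u_xx/u)_t = 2 u u_x`, and tend to `0`
as `|x - ct| → ∞`: classical soliton solutions. -/
theorem soliton_solutions_negKdV
    (c g : ℝ) (hc : c < 0) (hg : 0 < g) (ε : ℝ) (hε : ε = 1 ∨ ε = -1) :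
    let u : ℝ → ℝ → ℝ := fun x t =>
      ε * Real.sqrt (2 * |c| * g) * (1 / Real.cosh (Real.sqrt g * (x - c * t)))
    ContDiff ℝ (⊤ : ℕ∞) (fun p : ℝ × ℝ => u p.1 p.2)
    ∧ (∀ x t : ℝ, u x t ≠ 0)
    ∧ (∀ x t : ℝ,
        deriv (fun s => -(deriv (deriv (fun y => u y s)) x) / u x s) t
          = 2 * u x t * deriv (fun y => u y t) x)
    ∧ (∀ t : ℝ, Filter.Tendsto (fun x => u x t)
        (Filter.comap (fun x => |x - c * t|) Filter.atTop) (nhds 0)) := by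
  intro u
  set A := ε * √(2 * |c| * g)
  set k := √g
  have hk : k ^ 2 = g := sq_sqrt hg.le
  have hA : A ^ 2 = -2 * c * k ^ 2 := by
    have hε2 : ε ^ 2 = 1 := by rcases hε with rfl | rfl <;> norm_num
    rw [mul_pow, hε2, sq_sqrt (by positivity), abs_of_neg hc, hk]
    ring
  have hA0 : A ≠ 0 := by
    rw [← sq_pos_iff, hA]
    nlinarith [hk ▸ hg]
  set U := fun ξ => A * (cosh (k * ξ))⁻¹
  have hU0 (ξ : ℝ) : U ξ ≠ 0 := mul_ne_zero hA0 (inv_ne_zero (cosh_pos _).ne')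
  have hu : u = fun x t => U (x - c * t) := by simp only [u, U, one_div]; rfl
  rw [hu]
  refine ⟨contDiff_travelingWave (contDiff_sech_profile A k _) c, fun _ _ => hU0 _, ?_,
    fun t => tendsto_travelingWave (tendsto_sech_profile_comap_abs (sqrt_pos.2 hg).ne' A) (c * t)⟩
  exact isNegKdVSolution_travelingWave hc.ne
    ((contDiff_sech_profile A k 1).differentiable one_ne_zero) hU0
    (fun ξ => hk ▸ deriv_deriv_sech_profile hc.ne hA ξ)
end

section
/- Let g < 0 and c > 0, and define u(x,t) = √(c|g|) · tanh( √(|g|/2) · (x - ct) ) (respectively its negative). Then u is smooth on ℝ × ℝ, nonvanishing on the set { (x,t) : x ≠ ct }, and satisfies the negative-order KdV equation (-u_xx/u)_t = 2u·u_x there; moreover u(x,t) → ±√(c|g|) as x - ct → ±∞. Thus the equation possesses kink and anti-kink wave solutions. -/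
/-!
Write `T = tanh (k (x - c t))`. From `tanh' = 1 - tanh²`, the profile `u = A T` has
`u_xx = -2k²(1 - T²) u`, so `-u_xx/u = 2k²(1 - T²)` wherever `u ≠ 0`. Its `t`-derivative is
`4ck³ T (1 - T²)`, while `2 u u_x = 2A²k T (1 - T²)`; these agree as soon as `A² = 2ck²`, which is
the case for `A = ±√(c|g|)`, `k = √(|g|/2)`. The limits as `x → ±∞` are those of `tanh`.
-/

open Real Filter Topology

namespace Real

theorem tanh_eq_one_sub_two_div (x : ℝ) : tanh x = 1 - 2 / (exp (2 * x) + 1) := by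
  rw [tanh_eq, exp_neg, two_mul, exp_add]
  field_simp
  ring

theorem tanh_eq_zero_iff {x : ℝ} : tanh x = 0 ↔ x = 0 := by
  simp [tanh_eq_sinh_div_cosh, (cosh_pos x).ne']

theorem hasDerivAt_tanh (x : ℝ) : HasDerivAt tanh (1 - tanh x ^ 2) x := by
  have h := (hasDerivAt_sinh x).div (hasDerivAt_cosh x) (cosh_pos x).ne'
  rw [show sinh / cosh = tanh from funext fun y => (tanh_eq_sinh_div_cosh y).symm] at h
  refine h.congr_deriv ?_
  rw [tanh_eq_sinh_div_cosh]
  field_simp [(cosh_pos x).ne']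

theorem contDiff_tanh {n : WithTop ℕ∞} : ContDiff ℝ n tanh := by
  rw [show tanh = fun y => sinh y / cosh y from funext tanh_eq_sinh_div_cosh]
  exact contDiff_sinh.div contDiff_cosh fun x => (cosh_pos x).ne'

theorem tendsto_tanh_atTop : Tendsto tanh atTop (𝓝 1) := by
  have hden : Tendsto (fun x => exp (2 * x) + 1) atTop atTop :=
    tendsto_atTop_add_const_right _ 1 (tendsto_exp_atTop.comp (tendsto_id.const_mul_atTop two_pos))
  have hlim := (tendsto_const_nhds (x := (2 : ℝ)).div_atTop hden).const_sub 1
  rw [sub_zero] at hlim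
  exact hlim.congr fun x => (tanh_eq_one_sub_two_div x).symm

theorem tendsto_tanh_atBot : Tendsto tanh atBot (𝓝 (-1)) := by
  simpa [Function.comp_def] using (tendsto_tanh_atTop.comp tendsto_neg_atBot_atTop).neg

end Real

theorem HasDerivAt.tanh {f : ℝ → ℝ} {f' x : ℝ} (hf : HasDerivAt f f' x) :
    HasDerivAt (fun y => Real.tanh (f y)) ((1 - Real.tanh (f x) ^ 2) * f') x :=
  (Real.hasDerivAt_tanh (f x)).comp x hf

theorem HasDerivAt.one_sub_tanh_sq {f : ℝ → ℝ} {f' x : ℝ} (hf : HasDerivAt f f' x) :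
    HasDerivAt (fun y => 1 - Real.tanh (f y) ^ 2)
      (-2 * Real.tanh (f x) * (1 - Real.tanh (f x) ^ 2) * f') x :=
  ((hf.tanh.fun_pow 2).const_sub 1).congr_deriv (by push_cast; ring)

noncomputable def tanhWave (A k c x t : ℝ) : ℝ := A * tanh (k * (x - c * t))

namespace tanhWave

variable {A k c : ℝ}

theorem hasDerivAt_phase (x t : ℝ) : HasDerivAt (fun y => k * (y - c * t)) k x := by
  simpa using ((hasDerivAt_id x).sub_const (c * t)).const_mul k

theorem hasDerivAt_space (x t : ℝ) :
    HasDerivAt (fun y => tanhWave A k c y t) (A * k * (1 - tanh (k * (x - c * t)) ^ 2)) x :=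
  ((hasDerivAt_phase x t).tanh.const_mul A).congr_deriv (by ring)

theorem deriv_space (t : ℝ) :
    deriv (fun y => tanhWave A k c y t) = fun y => A * k * (1 - tanh (k * (y - c * t)) ^ 2) :=
  funext fun y => (hasDerivAt_space y t).deriv

theorem deriv_deriv_space (x t : ℝ) :
    deriv (deriv (fun y => tanhWave A k c y t)) x
      = -2 * k ^ 2 * (1 - tanh (k * (x - c * t)) ^ 2) * tanhWave A k c x t := by
  rw [deriv_space, ((hasDerivAt_phase x t).one_sub_tanh_sq.const_mul (A * k)).deriv, tanhWave]
  ring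

theorem neg_deriv_deriv_div {x t : ℝ} (hu : tanhWave A k c x t ≠ 0) :
    -deriv (deriv (fun y => tanhWave A k c y t)) x / tanhWave A k c x t
      = 2 * k ^ 2 * (1 - tanh (k * (x - c * t)) ^ 2) := by
  rw [deriv_deriv_space]
  field_simp

theorem contDiff {n : WithTop ℕ∞} : ContDiff ℝ n fun p : ℝ × ℝ => tanhWave A k c p.1 p.2 :=
  contDiff_const.mul (contDiff_tanh.comp
    (contDiff_const.mul (contDiff_fst.sub (contDiff_const.mul contDiff_snd))))

theorem negKdV (hA : A ^ 2 = 2 * c * k ^ 2) {x t : ℝ} (hu : tanhWave A k c x t ≠ 0) :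
    deriv (fun s => -deriv (deriv (fun y => tanhWave A k c y s)) x / tanhWave A k c x s) t
      = 2 * tanhWave A k c x t * deriv (fun y => tanhWave A k c y t) x := by
  -- The closed form of `-u_xx/u` needs `u ≠ 0`, and before differentiating in `s` it must
  -- hold on a whole neighbourhood of `t`.
  have hnear : ∀ᶠ s in 𝓝 t, tanhWave A k c x s ≠ 0 :=
    ((contDiff (n := 0)).continuous.comp (Continuous.prodMk_right x)).continuousAt.eventually_ne hu
  have hev : (fun s => -deriv (deriv (fun y => tanhWave A k c y s)) x / tanhWave A k c x s)
      =ᶠ[𝓝 t] fun s => 2 * k ^ 2 * (1 - tanh (k * (x - c * s)) ^ 2) :=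
    hnear.mono fun s hs => neg_deriv_deriv_div hs
  have hφ : HasDerivAt (fun s => k * (x - c * s)) (-(k * c)) t := by
    simpa using (((hasDerivAt_id t).const_mul c).const_sub x).const_mul k
  rw [hev.deriv_eq, (hφ.one_sub_tanh_sq.const_mul (2 * k ^ 2)).deriv,
    (hasDerivAt_space x t).deriv, tanhWave]
  linear_combination (-2 * k * tanh (k * (x - c * t)) * (1 - tanh (k * (x - c * t)) ^ 2)) * hA

theorem ne_zero (hA : A ≠ 0) (hk : k ≠ 0) {x t : ℝ} (hx : x ≠ c * t) :
    tanhWave A k c x t ≠ 0 :=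
  mul_ne_zero hA (tanh_eq_zero_iff.not.mpr (mul_ne_zero hk (sub_ne_zero.mpr hx)))

theorem tendsto_atTop (hk : 0 < k) (t : ℝ) :
    Tendsto (fun x => tanhWave A k c x t) atTop (𝓝 A) := by
  have hφ : Tendsto (fun x => k * (x - c * t)) atTop atTop :=
    (tendsto_atTop_add_const_right _ _ tendsto_id).const_mul_atTop hk
  simpa [tanhWave] using (tendsto_tanh_atTop.comp hφ).const_mul A

theorem tendsto_atBot (hk : 0 < k) (t : ℝ) :
    Tendsto (fun x => tanhWave A k c x t) atBot (𝓝 (-A)) := by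
  have hφ : Tendsto (fun x => k * (x - c * t)) atBot atBot :=
    (tendsto_atBot_add_const_right _ _ tendsto_id).const_mul_atBot hk
  simpa [tanhWave] using (tendsto_tanh_atBot.comp hφ).const_mul A

end tanhWave

/-- For `g < 0`, `c > 0`, the functions
`u(x,t) = ±√(c|g|) tanh(√(|g|/2) (x - ct))` are smooth on ℝ × ℝ, nonvanishing on
`{(x,t) : x ≠ ct}`, satisfy the negative-order KdV equation
`(-u_xx/u)_t = 2 u u_x` there, and tend to `±√(c|g|)` as `x - ct → ±∞`:
kink and anti-kink wave solutions. -/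
theorem kink_solutions_negKdV
    (c g : ℝ) (hg : g < 0) (hc : 0 < c) (ε : ℝ) (hε : ε = 1 ∨ ε = -1) :
    let u : ℝ → ℝ → ℝ := fun x t =>
      ε * Real.sqrt (c * |g|) * Real.tanh (Real.sqrt (|g| / 2) * (x - c * t))
    ContDiff ℝ (⊤ : ℕ∞) (fun p : ℝ × ℝ => u p.1 p.2)
    ∧ (∀ x t : ℝ, x ≠ c * t → u x t ≠ 0)
    ∧ (∀ x t : ℝ, x ≠ c * t →
        deriv (fun s => -(deriv (deriv (fun y => u y s)) x) / u x s) t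
          = 2 * u x t * deriv (fun y => u y t) x)
    ∧ (∀ t : ℝ, Filter.Tendsto (fun x => u x t) Filter.atTop
        (nhds (ε * Real.sqrt (c * |g|))))
    ∧ (∀ t : ℝ, Filter.Tendsto (fun x => u x t) Filter.atBot
        (nhds (-(ε * Real.sqrt (c * |g|))))) := by
  intro u
  have hcg : 0 < c * |g| := mul_pos hc (abs_pos.mpr hg.ne)
  have hk : 0 < √(|g| / 2) := sqrt_pos.mpr (half_pos (abs_pos.mpr hg.ne))
  have hε2 : ε ^ 2 = 1 := by rcases hε with rfl | rfl <;> norm_num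
  have hA : ε * √(c * |g|) ≠ 0 :=
    mul_ne_zero (by rintro rfl; norm_num at hε2) (sqrt_pos.mpr hcg).ne'
  have hAk : (ε * √(c * |g|)) ^ 2 = 2 * c * √(|g| / 2) ^ 2 := by
    rw [mul_pow, hε2, sq_sqrt hcg.le, sq_sqrt (by positivity)]
    ring
  exact ⟨tanhWave.contDiff, fun x t hx => tanhWave.ne_zero hA hk.ne' hx,
    fun x t hx => tanhWave.negKdV hAk (tanhWave.ne_zero hA hk.ne' hx),
    tanhWave.tendsto_atTop hk, tanhWave.tendsto_atBot hk⟩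
end
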